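/- Let (A,V,χ,F,ν) be a crossed product system with preunit and assume F is a cocycle satisfying the twisted module condition. Then for all a ∈ A and x ∈ E := A×V one has μ_E(j_ν(a)⊗x) = a·x and μ_E(x⊗j_ν(a)) = x·a, where μ_E is the restriction and corestriction of μ_𝓔 to A×V and the actions are those of the A-bimodule A⊗V. -/
import Mathlib


open TensorProduct

noncomputable section

namespace WeakCrossedProduct

variable {k : Type*} [Field k]
variable {A : Type*} [Ring A] [Algebra k A]
variable {V : Type*} [AddCommGroup V] [Module k V]

/-- The map `A ⊗ₖ (A ⊗ₖ V) → A ⊗ₖ V`, `a ⊗ x ↦ a • x`, i.e. `μ_A ⊗ id_V`. -/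
def actMap : A ⊗[k] (A ⊗[k] V) →ₗ[k] A ⊗[k] V :=
  TensorProduct.lift (LinearMap.mk₂ k (fun (a : A) (x : A ⊗[k] V) => a • x)
    (fun a b x => add_smul a b x)
    (fun c a x => smul_assoc c a x)
    (fun a x y => smul_add a x y)
    (fun c a x => smul_comm a c x))

/-- Given `g : V → A ⊗ V`, the map `A ⊗ V → A ⊗ V`, `a ⊗ u ↦ a • g u`. -/
def smulMap (g : V →ₗ[k] A ⊗[k] V) : A ⊗[k] V →ₗ[k] A ⊗[k] V :=
  TensorProduct.lift (LinearMap.mk₂ k (fun (a : A) (u : V) => a • g u)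
    (fun a b u => add_smul a b (g u))
    (fun c a u => smul_assoc c a (g u))
    (fun a u u' => show a • g (u + u') = a • g u + a • g u' by
      rw [map_add, smul_add])
    (fun c a u => show a • g (c • u) = c • (a • g u) by
      rw [map_smul]; exact smul_comm a c (g u)))

/-- The right action of `a' ∈ A` on `A ⊗ V`: `(a ⊗ v) · a' := a • χ (v ⊗ a')`. -/
def ract (χ : V ⊗[k] A →ₗ[k] A ⊗[k] V) (a' : A) : A ⊗[k] V →ₗ[k] A ⊗[k] V :=
  smulMap (χ ∘ₗ (TensorProduct.mk k V A).flip a')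

/-- `(A,V,χ)` is a twisted space:
`χ ∘ (id_V ⊗ μ_A) = (μ_A ⊗ id_V) ∘ (id_A ⊗ χ) ∘ (χ ⊗ id_A)` (stated on pure tensors). -/
def IsTwisting (χ : V ⊗[k] A →ₗ[k] A ⊗[k] V) : Prop :=
  ∀ (v : V) (a b : A), χ (v ⊗ₜ[k] (a * b)) = ract χ b (χ (v ⊗ₜ[k] a))

/-- `∇_χ(x) := x · 1_A`. -/
def nabla (χ : V ⊗[k] A →ₗ[k] A ⊗[k] V) : A ⊗[k] V →ₗ[k] A ⊗[k] V :=
  ract χ 1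

/-- `A × V := ∇_χ(A ⊗ V)`. -/
def AxV (χ : V ⊗[k] A →ₗ[k] A ⊗[k] V) : Submodule k (A ⊗[k] V) :=
  LinearMap.range (nabla χ)

/-- `X_χ := {x ∈ A ⊗ V : x · 1_A = 0}`. -/
def Xchi (χ : V ⊗[k] A →ₗ[k] A ⊗[k] V) : Submodule k (A ⊗[k] V) :=
  LinearMap.ker (nabla χ)

/-- `μ_𝓔 := (μ_A ⊗ id_V) ∘ (μ_A ⊗ F) ∘ (id_A ⊗ χ ⊗ id_V)`. -/
def muE (χ : V ⊗[k] A →ₗ[k] A ⊗[k] V) (F : V ⊗[k] V →ₗ[k] A ⊗[k] V) :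
    (A ⊗[k] V) ⊗[k] (A ⊗[k] V) →ₗ[k] A ⊗[k] V :=
  actMap ∘ₗ
  LinearMap.lTensor A (actMap) ∘ₗ
  LinearMap.lTensor A (LinearMap.lTensor A F ∘ₗ (TensorProduct.assoc k A V V).toLinearMap) ∘ₗ
  LinearMap.lTensor A (LinearMap.rTensor V χ) ∘ₗ
  LinearMap.lTensor A (TensorProduct.assoc k V A V).symm.toLinearMap ∘ₗ
  (TensorProduct.assoc k A V (A ⊗[k] V)).toLinearMap

/-- The twisted module condition (stated on pure tensors). -/
def TwistedModuleCond (χ : V ⊗[k] A →ₗ[k] A ⊗[k] V) (F : V ⊗[k] V →ₗ[k] A ⊗[k] V) : Prop :=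
  ∀ (v w : V) (a : A),
    ract χ a (F (v ⊗ₜ[k] w)) = muE χ F (((1 : A) ⊗ₜ[k] v) ⊗ₜ[k] χ (w ⊗ₜ[k] a))

/-- The cocycle condition (stated on pure tensors). -/
def CocycleCond (χ : V ⊗[k] A →ₗ[k] A ⊗[k] V) (F : V ⊗[k] V →ₗ[k] A ⊗[k] V) : Prop :=
  ∀ (v w u : V),
    smulMap (F ∘ₗ (TensorProduct.mk k V V).flip u) (F (v ⊗ₜ[k] w)) =
      muE χ F (((1 : A) ⊗ₜ[k] v) ⊗ₜ[k] F (w ⊗ₜ[k] u))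

/-- Preunit condition (i). -/
def Preunit1 (χ : V ⊗[k] A →ₗ[k] A ⊗[k] V) (F : V ⊗[k] V →ₗ[k] A ⊗[k] V)
    (ν : A ⊗[k] V) : Prop :=
  ∀ v : V, muE χ F (((1 : A) ⊗ₜ[k] v) ⊗ₜ[k] ν) = nabla χ ((1 : A) ⊗ₜ[k] v)

/-- Preunit condition (ii). -/
def Preunit2 (χ : V ⊗[k] A →ₗ[k] A ⊗[k] V) (F : V ⊗[k] V →ₗ[k] A ⊗[k] V)
    (ν : A ⊗[k] V) : Prop :=
  ∀ v : V, smulMap (F ∘ₗ (TensorProduct.mk k V V).flip v) ν = nabla χ ((1 : A) ⊗ₜ[k] v)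

/-- Preunit condition (iii). -/
def Preunit3 (χ : V ⊗[k] A →ₗ[k] A ⊗[k] V) (ν : A ⊗[k] V) : Prop :=
  ∀ a : A, ract χ a ν = a • ν

/-- `γ(v) := ∇_χ(1_A ⊗ v)`. -/
def gammaMap (χ : V ⊗[k] A →ₗ[k] A ⊗[k] V) : V → A ⊗[k] V :=
  fun v => nabla χ ((1 : A) ⊗ₜ[k] v)

/-- `j'_ν(a) := a · ν(1)`. -/
def jnu' (ν : A ⊗[k] V) : A → A ⊗[k] V := fun a => a • ν

/-- `j_ν(a) := ∇_χ(j'_ν(a))`. -/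
def jnu (χ : V ⊗[k] A →ₗ[k] A ⊗[k] V) (ν : A ⊗[k] V) : A → A ⊗[k] V :=
  fun a => nabla χ (a • ν)

section Aux

lemma smulMap_tmul (g : V →ₗ[k] A ⊗[k] V) (a : A) (u : V) :
    smulMap g (a ⊗ₜ[k] u) = a • g u := rfl

lemma actMap_tmul (a : A) (x : A ⊗[k] V) : actMap (a ⊗ₜ[k] x) = a • x := rfl

lemma smulMap_smul (g : V →ₗ[k] A ⊗[k] V) (a : A) (x : A ⊗[k] V) :
    smulMap g (a • x) = a • smulMap g x := by
  induction x using TensorProduct.induction_on with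
  | zero => simp
  | tmul b u =>
      rw [smul_tmul', smulMap_tmul, smulMap_tmul, smul_eq_mul, mul_smul]
  | add x y hx hy => rw [smul_add, map_add, map_add, hx, hy, smul_add]

lemma ract_tmul (χ : V ⊗[k] A →ₗ[k] A ⊗[k] V) (a' b : A) (v : V) :
    ract χ a' (b ⊗ₜ[k] v) = b • χ (v ⊗ₜ[k] a') := rfl

lemma ract_smul (χ : V ⊗[k] A →ₗ[k] A ⊗[k] V) (a' a : A) (x : A ⊗[k] V) :
    ract χ a' (a • x) = a • ract χ a' x := smulMap_smul _ a x

lemma ract_ract (χ : V ⊗[k] A →ₗ[k] A ⊗[k] V) (hχ : IsTwisting χ)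
    (a b : A) (x : A ⊗[k] V) :
    ract χ b (ract χ a x) = ract χ (a * b) x := by
  induction x using TensorProduct.induction_on with
  | zero => simp
  | tmul c v => rw [ract_tmul, ract_smul, ← hχ, ract_tmul]
  | add x y hx hy => rw [map_add, map_add, map_add, hx, hy]

lemma nabla_nabla (χ : V ⊗[k] A →ₗ[k] A ⊗[k] V) (hχ : IsTwisting χ)
    (x : A ⊗[k] V) : nabla χ (nabla χ x) = nabla χ x := by
  rw [nabla, ract_ract χ hχ, one_mul]

/-- `m2(v ⊗ (b ⊗ w)) = Σ b_i • F(v_i ⊗ w)` where `χ(v ⊗ b) = Σ b_i ⊗ v_i`. -/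
def m2 (χ : V ⊗[k] A →ₗ[k] A ⊗[k] V) (F : V ⊗[k] V →ₗ[k] A ⊗[k] V) :
    V ⊗[k] (A ⊗[k] V) →ₗ[k] A ⊗[k] V :=
  actMap ∘ₗ LinearMap.lTensor A F ∘ₗ (TensorProduct.assoc k A V V).toLinearMap ∘ₗ
    LinearMap.rTensor V χ ∘ₗ (TensorProduct.assoc k V A V).symm.toLinearMap

lemma m2_aux (χ : V ⊗[k] A →ₗ[k] A ⊗[k] V) (F : V ⊗[k] V →ₗ[k] A ⊗[k] V)
    (u : V) (z : A ⊗[k] V) :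
    actMap (LinearMap.lTensor A F ((TensorProduct.assoc k A V V) (z ⊗ₜ[k] u))) =
      smulMap (F ∘ₗ (TensorProduct.mk k V V).flip u) z := by
  induction z using TensorProduct.induction_on with
  | zero => simp
  | tmul a' v' =>
      rw [TensorProduct.assoc_tmul, LinearMap.lTensor_tmul, actMap_tmul, smulMap_tmul]
      rfl
  | add x y hx hy =>
      rw [TensorProduct.add_tmul, map_add, map_add, map_add, hx, hy, map_add]

lemma m2_tmul (χ : V ⊗[k] A →ₗ[k] A ⊗[k] V) (F : V ⊗[k] V →ₗ[k] A ⊗[k] V)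
    (v : V) (c : A) (u : V) :
    m2 χ F (v ⊗ₜ[k] (c ⊗ₜ[k] u)) =
      smulMap (F ∘ₗ (TensorProduct.mk k V V).flip u) (χ (v ⊗ₜ[k] c)) := by
  rw [m2]
  simp only [LinearMap.comp_apply, LinearEquiv.coe_coe, TensorProduct.assoc_symm_tmul,
    LinearMap.rTensor_tmul]
  exact m2_aux χ F u (χ (v ⊗ₜ[k] c))

lemma muE_tmul_left (χ : V ⊗[k] A →ₗ[k] A ⊗[k] V) (F : V ⊗[k] V →ₗ[k] A ⊗[k] V)
    (b : A) (v : V) (x : A ⊗[k] V) :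
    muE χ F ((b ⊗ₜ[k] v) ⊗ₜ[k] x) = b • m2 χ F (v ⊗ₜ[k] x) := by
  rw [muE, m2]
  simp only [LinearMap.comp_apply, LinearEquiv.coe_coe, TensorProduct.assoc_tmul,
    LinearMap.lTensor_tmul]
  rw [actMap_tmul]

lemma muE_smul_left (χ : V ⊗[k] A →ₗ[k] A ⊗[k] V) (F : V ⊗[k] V →ₗ[k] A ⊗[k] V)
    (a : A) (y x : A ⊗[k] V) :
    muE χ F ((a • y) ⊗ₜ[k] x) = a • muE χ F (y ⊗ₜ[k] x) := by
  induction y using TensorProduct.induction_on with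
  | zero => simp
  | tmul b v =>
      rw [smul_tmul', smul_eq_mul, muE_tmul_left, muE_tmul_left, mul_smul]
  | add y y' hy hy' =>
      rw [smul_add, TensorProduct.add_tmul, TensorProduct.add_tmul, map_add, map_add,
        hy, hy', smul_add]

lemma muE_tmul_right (χ : V ⊗[k] A →ₗ[k] A ⊗[k] V) (F : V ⊗[k] V →ₗ[k] A ⊗[k] V)
    (y : A ⊗[k] V) (b : A) (w : V) :
    muE χ F (y ⊗ₜ[k] (b ⊗ₜ[k] w)) =
      smulMap (F ∘ₗ (TensorProduct.mk k V V).flip w) (ract χ b y) := by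
  induction y using TensorProduct.induction_on with
  | zero => simp [TensorProduct.zero_tmul]
  | tmul e u =>
      rw [muE_tmul_left, m2_tmul, ract_tmul, smulMap_smul]
  | add y y' hy hy' =>
      rw [TensorProduct.add_tmul, map_add, map_add, map_add, hy, hy']

lemma m2_smul (χ : V ⊗[k] A →ₗ[k] A ⊗[k] V) (F : V ⊗[k] V →ₗ[k] A ⊗[k] V)
    (hχ : IsTwisting χ) (v : V) (a : A) (y : A ⊗[k] V) :
    m2 χ F (v ⊗ₜ[k] (a • y)) = muE χ F (χ (v ⊗ₜ[k] a) ⊗ₜ[k] y) := by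
  induction y using TensorProduct.induction_on with
  | zero => simp [TensorProduct.tmul_zero]
  | tmul e u =>
      rw [smul_tmul', smul_eq_mul, m2_tmul, hχ, muE_tmul_right]
  | add y y' hy hy' =>
      rw [smul_add, TensorProduct.tmul_add, TensorProduct.tmul_add, map_add, map_add,
        hy, hy']

lemma muE_nu_right (χ : V ⊗[k] A →ₗ[k] A ⊗[k] V) (F : V ⊗[k] V →ₗ[k] A ⊗[k] V)
    (ν : A ⊗[k] V) (hν1 : Preunit1 χ F ν) (z : A ⊗[k] V) :
    muE χ F (z ⊗ₜ[k] ν) = nabla χ z := by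
  induction z using TensorProduct.induction_on with
  | zero => simp [TensorProduct.zero_tmul]
  | tmul a' v' =>
      have h1 : m2 χ F (v' ⊗ₜ[k] ν) = nabla χ ((1 : A) ⊗ₜ[k] v') := by
        have := hν1 v'
        rwa [muE_tmul_left, one_smul] at this
      rw [muE_tmul_left, h1, nabla, ract_tmul, ract_tmul, one_smul]
  | add z z' hz hz' =>
      rw [TensorProduct.add_tmul, map_add, map_add, hz, hz']

lemma m2_smul_nu (χ : V ⊗[k] A →ₗ[k] A ⊗[k] V) (F : V ⊗[k] V →ₗ[k] A ⊗[k] V)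
    (ν : A ⊗[k] V) (hχ : IsTwisting χ) (hν1 : Preunit1 χ F ν) (v : V) (a : A) :
    m2 χ F (v ⊗ₜ[k] (a • ν)) = χ (v ⊗ₜ[k] a) := by
  rw [m2_smul χ F hχ, muE_nu_right χ F ν hν1]
  have : χ (v ⊗ₜ[k] (a * 1)) = ract χ 1 (χ (v ⊗ₜ[k] a)) := hχ v a 1
  rw [mul_one] at this
  rw [nabla, ← this]

lemma muE_nu_left (χ : V ⊗[k] A →ₗ[k] A ⊗[k] V) (F : V ⊗[k] V →ₗ[k] A ⊗[k] V)
    (ν : A ⊗[k] V) (hν2 : Preunit2 χ F ν) (hν3 : Preunit3 χ ν) (x : A ⊗[k] V) :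
    muE χ F (ν ⊗ₜ[k] x) = nabla χ x := by
  induction x using TensorProduct.induction_on with
  | zero => simp [TensorProduct.tmul_zero]
  | tmul b w =>
      rw [muE_tmul_right, hν3, smulMap_smul, hν2, nabla, ract_tmul, ract_tmul, one_smul]
  | add x x' hx hx' =>
      rw [TensorProduct.tmul_add, map_add, map_add, hx, hx']

lemma muE_smul_nu (χ : V ⊗[k] A →ₗ[k] A ⊗[k] V) (F : V ⊗[k] V →ₗ[k] A ⊗[k] V)
    (ν : A ⊗[k] V) (hχ : IsTwisting χ) (hν1 : Preunit1 χ F ν) (a : A) (x : A ⊗[k] V) :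
    muE χ F (x ⊗ₜ[k] (a • ν)) = ract χ a x := by
  induction x using TensorProduct.induction_on with
  | zero => simp [TensorProduct.zero_tmul]
  | tmul b v =>
      rw [muE_tmul_left, m2_smul_nu χ F ν hχ hν1, ract_tmul]
  | add x x' hx hx' =>
      rw [TensorProduct.add_tmul, map_add, map_add, hx, hx']

lemma jnu_eq (χ : V ⊗[k] A →ₗ[k] A ⊗[k] V) (ν : A ⊗[k] V)
    (hχ : IsTwisting χ) (hν3 : Preunit3 χ ν) (a : A) :
    jnu χ ν a = a • ν := by
  rw [jnu, nabla, ← hν3 a, ract_ract χ hχ, mul_one, hν3 a]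

end Aux

theorem statement_9 (χ : V ⊗[k] A →ₗ[k] A ⊗[k] V) (F : V ⊗[k] V →ₗ[k] A ⊗[k] V)
    (ν : A ⊗[k] V)
    (hχ : IsTwisting χ) (hF : ∀ x : V ⊗[k] V, F x ∈ AxV χ)
    (hν1 : Preunit1 χ F ν) (hν2 : Preunit2 χ F ν) (hν3 : Preunit3 χ ν)
    (htm : TwistedModuleCond χ F) (hcoc : CocycleCond χ F) :
    ∀ (a : A) (x : A ⊗[k] V), x ∈ AxV χ →
      muE χ F (jnu χ ν a ⊗ₜ[k] x) = a • x ∧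
      muE χ F (x ⊗ₜ[k] jnu χ ν a) = ract χ a x := by
  intro a x hx
  obtain ⟨y, rfl⟩ := hx
  constructor
  · rw [jnu_eq χ ν hχ hν3, muE_smul_left, muE_nu_left χ F ν hν2 hν3,
      nabla_nabla χ hχ]
  · rw [jnu_eq χ ν hχ hν3, muE_smul_nu χ F ν hχ hν1]

end WeakCrossedProduct
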